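/- Let n ≥ 1 be an integer and let x, y ∈ ℝⁿ with |y−x| ≥ 1. Let ε ∈ {−1,1}ⁿ be a sign vector such that y−x lies in the closed orthant of ε, and set x' = x + η_ε. Then |y−x|² ≥ |y−x'|² + (1/n)|y−x|. -/

import Mathlib

open MeasureTheory Metric Set

noncomputable section

/-- ℝⁿ as a Euclidean space. -/
abbrev Euc (n : ℕ) : Type := EuclideanSpace ℝ (Fin n)

/-- For a sign vector `ε ∈ {-1,1}ⁿ`, the perturbation vector `η_ε = (1/n) ε`. -/
def signPerturb (n : ℕ) (ε : Fin n → Bool) : Euc n :=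
  (EuclideanSpace.equiv (Fin n) ℝ).symm fun i => (1 / (n : ℝ)) * (if ε i then 1 else -1)

/-! The step `x ↦ x + η` moves toward `y` by at least `(1/n)|y - x|` in the inner product,
since on the orthant of `ε` the pairing with `η_ε` is `(1/n)` times the `ℓ¹`-norm, which
dominates the Euclidean norm; its cost `|η|² = 1/n` is absorbed because `|y - x| ≥ 1`. -/

theorem norm_sub_sq_add_mul_norm_le {E : Type*} [NormedAddCommGroup E] [InnerProductSpace ℝ E]
    {z η : E} {c : ℝ} (hc : 0 ≤ c) (hz : 1 ≤ ‖z‖) (hη : ‖η‖ ^ 2 = c)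
    (hinner : c * ‖z‖ ≤ inner ℝ z η) :
    ‖z - η‖ ^ 2 + c * ‖z‖ ≤ ‖z‖ ^ 2 := by
  rw [norm_sub_sq_real, hη]
  nlinarith

theorem EuclideanSpace.norm_le_sum_norm {𝕜 ι : Type*} [RCLike 𝕜] [Fintype ι]
    (x : EuclideanSpace 𝕜 ι) : ‖x‖ ≤ ∑ i, ‖x i‖ := by
  refine (abs_le_of_sq_le_sq' ?_ (by positivity)).2
  calc ‖x‖ ^ 2 = ∑ i, ‖x i‖ ^ 2 := EuclideanSpace.norm_sq_eq x
    _ ≤ (∑ i, ‖x i‖) ^ 2 := Finset.sum_sq_le_sq_sum_of_nonneg fun _ _ ↦ norm_nonneg _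

theorem mul_eq_abs_of_abs_eq_one {s t : ℝ} (hs : |s| = 1) (h : 0 ≤ s * t) : s * t = |t| := by
  rw [← abs_of_nonneg h, abs_mul, hs, one_mul]

theorem abs_sign_ite (b : Bool) : |(if b then (1 : ℝ) else -1)| = 1 := by
  cases b <;> simp

theorem signPerturb_apply (n : ℕ) (ε : Fin n → Bool) (i : Fin n) :
    signPerturb n ε i = 1 / (n : ℝ) * (if ε i then 1 else -1) :=
  rfl

theorem norm_signPerturb_sq (n : ℕ) (ε : Fin n → Bool) : ‖signPerturb n ε‖ ^ 2 = 1 / (n : ℝ) := by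
  have hcoord : ∀ i, ‖signPerturb n ε i‖ ^ 2 = (1 / (n : ℝ)) ^ 2 := fun i ↦ by
    rw [signPerturb_apply, Real.norm_eq_abs, sq_abs, mul_pow, ← sq_abs (ite _ _ _),
      abs_sign_ite, one_pow, mul_one]
  simp only [EuclideanSpace.norm_sq_eq, hcoord, Finset.sum_const, Finset.card_univ,
    Fintype.card_fin, nsmul_eq_mul]
  rcases eq_or_ne (n : ℝ) 0 with hn | hn
  · simp [hn]
  · field_simp

theorem inner_signPerturb_of_mem_orthant (n : ℕ) (ε : Fin n → Bool) (z : Euc n)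
    (horth : ∀ i : Fin n, 0 ≤ (if ε i then (1 : ℝ) else -1) * z i) :
    inner ℝ z (signPerturb n ε) = 1 / (n : ℝ) * ∑ i, |z i| := by
  simp only [PiLp.inner_apply, RCLike.inner_apply, conj_trivial, signPerturb_apply,
    Finset.mul_sum]
  refine Finset.sum_congr rfl fun i _ ↦ ?_
  rw [← mul_eq_abs_of_abs_eq_one (abs_sign_ite (ε i)) (horth i)]
  ring

theorem orthant_perturbation_inequality_general (n : ℕ)
    (x y : Euc n) (hxy : 1 ≤ ‖y - x‖) (ε : Fin n → Bool)
    (horth : ∀ i : Fin n, 0 ≤ (if ε i then (1 : ℝ) else -1) * (y - x) i) :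
    ‖y - (x + signPerturb n ε)‖ ^ 2 + (1 / (n : ℝ)) * ‖y - x‖ ≤ ‖y - x‖ ^ 2 := by
  rw [← sub_sub]
  refine norm_sub_sq_add_mul_norm_le (by positivity) hxy (norm_signPerturb_sq n ε) ?_
  rw [inner_signPerturb_of_mem_orthant n ε _ horth]
  gcongr
  simpa only [Real.norm_eq_abs] using EuclideanSpace.norm_le_sum_norm (y - x)

/-- If `|y - x| ≥ 1` and `y - x` lies in the closed orthant of the sign vector `ε`
(i.e. `ε_i (y-x)_i ≥ 0` for all `i`), then with `x' = x + η_ε` one has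
`|y - x|² ≥ |y - x'|² + (1/n)|y - x|`. -/
theorem orthant_perturbation_inequality (n : ℕ) (hn : 1 ≤ n)
    (x y : Euc n) (hxy : 1 ≤ ‖y - x‖) (ε : Fin n → Bool)
    (horth : ∀ i : Fin n, 0 ≤ (if ε i then (1 : ℝ) else -1) * (y - x) i) :
    ‖y - (x + signPerturb n ε)‖ ^ 2 + (1 / (n : ℝ)) * ‖y - x‖ ≤ ‖y - x‖ ^ 2 :=
  orthant_perturbation_inequality_general n x y hxy ε horth

end
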